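/- Let d ≥ 4, 2 ≤ k ≤ d−2, and let σ₁ ≥ σ₂ ≥ … ≥ σ_d > 0 be real numbers. Set χ₂ := σ₁⋯σ_{k−1}·σ_{k+1}. Then for every strictly increasing tuple 1 ≤ i₁ < i₂ < … < i_k ≤ d with (i₁,…,i_k) ∉ {(1,…,k), (1,…,k−1,k+1)}, one has χ₂/(σ_{i₁}⋯σ_{i_k}) ≥ min(σ_{k+1}/σ_{k+2}, σ_{k−1}/σ_k). -/
import Mathlib


/-- Let `σ₁ ≥ … ≥ σ_d > 0`, `d ≥ 4`, `2 ≤ k ≤ d − 2`, and set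
`χ₂ := σ₁⋯σ_{k−1}·σ_{k+1}`.  For every strictly increasing tuple
`1 ≤ i₁ < … < i_k ≤ d` different from `(1,…,k)` and from `(1,…,k−1,k+1)`, one has
`χ₂ / (σ_{i₁}⋯σ_{i_k}) ≥ min(σ_{k+1}/σ_{k+2}, σ_{k−1}/σ_k)`. -/
theorem decreasing_products_second_third_gap (d k : ℕ) (hd : 4 ≤ d)
    (hk : 2 ≤ k) (hkd : k ≤ d - 2)
    (σ : ℕ → ℝ)
    (hmono : ∀ j : ℕ, 1 ≤ j → j + 1 ≤ d → σ (j + 1) ≤ σ j)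
    (hpos : ∀ j : ℕ, 1 ≤ j → j ≤ d → 0 < σ j)
    (i : Fin k → ℕ) (hsm : StrictMono i)
    (hbd : ∀ l : Fin k, 1 ≤ i l ∧ i l ≤ d)
    (hne₁ : i ≠ fun l : Fin k => (l : ℕ) + 1)
    (hne₂ : i ≠ fun l : Fin k => if (l : ℕ) + 1 < k then (l : ℕ) + 1 else k + 1) :
    min (σ (k + 1) / σ (k + 2)) (σ (k - 1) / σ k) ≤
      ((∏ j ∈ Finset.Icc 1 (k - 1), σ j) * σ (k + 1)) / ∏ l : Fin k, σ (i l) := by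
  -- antitonicity of σ on [1, d]
  have hanti : ∀ a b : ℕ, 1 ≤ a → a ≤ b → b ≤ d → σ b ≤ σ a := by
    intro a b ha hab hbdle
    induction b with
    | zero => omega
    | succ n ih =>
      rcases Nat.lt_or_ge a (n + 1) with h | h
      · exact le_trans (hmono n (by omega) (by omega)) (ih (by omega) (by omega))
      · have : a = n + 1 := by omega
        subst this; exact le_refl _
  -- gap estimate for a strict mono map
  have hgap : ∀ n (hn : n < k) m (hm : m < k), n ≤ m →
      i ⟨n, hn⟩ + (m - n) ≤ i ⟨m, hm⟩ := by
    intro n hn m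
    induction m with
    | zero =>
      intro hm h
      have : n = 0 := by omega
      subst this; simp
    | succ p ih =>
      intro hm h
      rcases Nat.lt_or_ge n (p + 1) with h' | h'
      · have h1 := ih (by omega) (by omega)
        have h2 : i ⟨p, by omega⟩ < i ⟨p + 1, hm⟩ := hsm (by simp [Fin.lt_def])
        omega
      · have : n = p + 1 := by omega
        subst this; simp
  have hlow : ∀ l : Fin k, (l : ℕ) + 1 ≤ i l := by
    intro l
    have h0 : 1 ≤ i ⟨0, by omega⟩ := (hbd _).1
    have := hgap 0 (by omega) l.val l.isLt (Nat.zero_le _)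
    have : i ⟨(l : ℕ), l.isLt⟩ = i l := rfl
    omega
  obtain ⟨m, rfl⟩ : ∃ m, k = m + 2 := ⟨k - 2, by omega⟩
  have hmd : m + 4 ≤ d := by omega
  have hk1 : m + 2 - 1 = m + 1 := rfl
  rw [hk1]
  -- positivity
  have hQpos : 0 < ∏ j ∈ Finset.Icc 1 (m + 1), σ j := by
    apply Finset.prod_pos
    intro j hj
    rw [Finset.mem_Icc] at hj
    exact hpos j hj.1 (by omega)
  have hPpos : 0 < ∏ l : Fin (m + 2), σ (i l) := by
    apply Finset.prod_pos
    intro l _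
    exact hpos _ (hbd l).1 (hbd l).2
  -- range → Icc product identity
  have hrange : ∀ n : ℕ, ∏ x ∈ Finset.range n, σ (x + 1) = ∏ j ∈ Finset.Icc 1 n, σ j := by
    intro n
    induction n with
    | zero => simp
    | succ p ih => rw [Finset.prod_range_succ, ih, Finset.prod_Icc_succ_top (by omega)]
  set last : Fin (m + 2) := Fin.last (m + 1) with hlastdef
  have hlastval : (last : ℕ) = m + 1 := rfl
  rcases Nat.lt_or_ge (i last) (m + 4) with hcase | hcase
  · -- Case B : i last ≤ m + 3, i.e. the tuple lives in {1, …, m+3}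
    have hlast_lb : m + 2 ≤ i last := by have := hlow last; rw [hlastval] at this; omega
    have hup : ∀ l : Fin (m + 2), i l + (m + 1 - (l : ℕ)) ≤ i last := by
      intro l
      have h := hgap l.val l.isLt (m + 1) (by omega) (by omega)
      have e1 : i ⟨(l : ℕ), l.isLt⟩ = i l := rfl
      have e2 : (⟨m + 1, by omega⟩ : Fin (m + 2)) = last := rfl
      rw [e1, e2] at h
      omega
    -- i last = m + 3 (it cannot be m + 2, else i is the identity tuple)
    have hlast_eq : i last = m + 3 := by
      rcases Nat.lt_or_ge (i last) (m + 3) with h | h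
      · exfalso
        apply hne₁
        funext l
        have h1 := hlow l
        have h2 := hup l
        have h3 := l.isLt
        omega
      · omega
    -- the minimal index where i deviates from l ↦ l + 1
    have hSne : (Finset.univ.filter (fun l : Fin (m + 2) => i l ≠ (l : ℕ) + 1)).Nonempty := by
      refine ⟨last, ?_⟩
      simp only [Finset.mem_filter, Finset.mem_univ, true_and]
      rw [hlast_eq, hlastval]; omega
    set l₀ : Fin (m + 2) := (Finset.univ.filter (fun l : Fin (m + 2) => i l ≠ (l : ℕ) + 1)).min' hSne with hl₀def
    have hl₀mem : i l₀ ≠ (l₀ : ℕ) + 1 := by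
      have := Finset.min'_mem _ hSne
      simpa using this
    have hl₀min : ∀ l : Fin (m + 2), l < l₀ → i l = (l : ℕ) + 1 := by
      intro l hl
      by_contra h
      have : l₀ ≤ l := Finset.min'_le _ _ (by simpa using h)
      exact absurd hl (not_lt_of_ge this)
    -- values of i
    have hval : ∀ l : Fin (m + 2), i l = if (l : ℕ) < (l₀ : ℕ) then (l : ℕ) + 1 else (l : ℕ) + 2 := by
      intro l
      split
      · next h => exact hl₀min l (Fin.lt_def.mpr h)
      · next h =>
        have hub := hup l
        rw [hlast_eq] at hub
        have hlb : i l₀ + ((l : ℕ) - (l₀ : ℕ)) ≤ i l := by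
          have hg := hgap l₀.val l₀.isLt l.val l.isLt (by omega)
          have e1 : i ⟨(l₀ : ℕ), l₀.isLt⟩ = i l₀ := rfl
          have e2 : i ⟨(l : ℕ), l.isLt⟩ = i l := rfl
          rw [e1, e2] at hg; exact hg
        have hl₀lb := hlow l₀
        have := l.isLt
        omega
    -- l₀ ≤ m (not the last index, else i is the second excluded tuple)
    have hl₀lt : (l₀ : ℕ) < m + 1 := by
      rcases Nat.lt_or_ge (l₀ : ℕ) (m + 1) with h | h
      · exact h
      · exfalso
        apply hne₂
        funext l
        rw [hval l]
        have hl₀v : (l₀ : ℕ) = m + 1 := by have := l₀.isLt; omega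
        have := l.isLt
        rcases Nat.lt_or_ge ((l : ℕ) + 1) (m + 2) with h' | h'
        · rw [if_pos (by omega), if_pos h']
        · rw [if_neg (by omega), if_neg (by omega)]
          omega
    -- image of i is Icc 1 (m+3) minus l₀ + 1
    have himg : Finset.image i Finset.univ = (Finset.Icc 1 (m + 3)).erase ((l₀ : ℕ) + 1) := by
      apply Finset.eq_of_subset_of_card_le
      · intro x hx
        rw [Finset.mem_image] at hx
        obtain ⟨l, _, rfl⟩ := hx
        rw [Finset.mem_erase, Finset.mem_Icc, hval l]
        have := l.isLt
        split <;> omega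
      · rw [Finset.card_erase_of_mem (by rw [Finset.mem_Icc]; omega),
          Finset.card_image_of_injective _ hsm.injective, Finset.card_univ,
          Fintype.card_fin, Nat.card_Icc]
        omega
    -- product identity
    have hP : (∏ l : Fin (m + 2), σ (i l)) * σ ((l₀ : ℕ) + 1) = ∏ j ∈ Finset.Icc 1 (m + 3), σ j := by
      have h1 : ∏ l : Fin (m + 2), σ (i l) =
          ∏ x ∈ Finset.image i Finset.univ, σ x :=
        (Finset.prod_image (fun x _ y _ h => hsm.injective h)).symm
      rw [h1, himg, mul_comm]
      exact Finset.mul_prod_erase _ _ (by rw [Finset.mem_Icc]; omega)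
    have hIcc : ∏ j ∈ Finset.Icc 1 (m + 3), σ j =
        (∏ j ∈ Finset.Icc 1 (m + 1), σ j) * σ (m + 2) * σ (m + 3) := by
      rw [Finset.prod_Icc_succ_top (by omega), Finset.prod_Icc_succ_top (by omega)]
    -- conclude
    have hσcmp : σ (m + 1) ≤ σ ((l₀ : ℕ) + 1) := hanti _ _ (by omega) (by omega) (by omega)
    refine le_trans (min_le_right _ _) ?_
    rw [div_le_div_iff₀ (hpos (m + 2) (by omega) (by omega)) hPpos]
    have key : σ (m + 1) * (∏ l : Fin (m + 2), σ (i l)) ≤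
        (∏ j ∈ Finset.Icc 1 (m + 1), σ j) * σ (m + 2) * σ (m + 3) := by
      rw [← hIcc, ← hP]
      calc σ (m + 1) * (∏ l : Fin (m + 2), σ (i l))
          ≤ σ ((l₀ : ℕ) + 1) * (∏ l : Fin (m + 2), σ (i l)) :=
            mul_le_mul_of_nonneg_right hσcmp (le_of_lt hPpos)
        _ = (∏ l : Fin (m + 2), σ (i l)) * σ ((l₀ : ℕ) + 1) := by ring
    calc σ (m + 2 - 1) * (∏ l : Fin (m + 2), σ (i l))
        = σ (m + 1) * (∏ l : Fin (m + 2), σ (i l)) := by rw [hk1]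
      _ ≤ (∏ j ∈ Finset.Icc 1 (m + 1), σ j) * σ (m + 2) * σ (m + 3) := key
      _ = (∏ j ∈ Finset.Icc 1 (m + 1), σ j) * σ (m + 2 + 1) * σ (m + 2) := by ring
  · -- Case A : i last ≥ m + 4
    have hsplit : ∏ l : Fin (m + 2), σ (i l) =
        (∏ l : Fin (m + 1), σ (i l.castSucc)) * σ (i last) :=
      Fin.prod_univ_castSucc (fun l => σ (i l))
    have hbound1 : ∏ l : Fin (m + 1), σ (i l.castSucc) ≤ ∏ j ∈ Finset.Icc 1 (m + 1), σ j := by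
      rw [← hrange (m + 1), ← Fin.prod_univ_eq_prod_range (fun x => σ (x + 1)) (m + 1)]
      apply Finset.prod_le_prod
      · intro l _
        exact le_of_lt (hpos _ (hbd _).1 (hbd _).2)
      · intro l _
        have hl : (l : ℕ) + 1 ≤ i l.castSucc := by
          have := hlow l.castSucc
          simpa using this
        exact hanti _ _ (by omega) hl (hbd _).2
    have hbound2 : σ (i last) ≤ σ (m + 4) := hanti _ _ (by omega) hcase (hbd _).2
    have hPbound : ∏ l : Fin (m + 2), σ (i l) ≤
        (∏ j ∈ Finset.Icc 1 (m + 1), σ j) * σ (m + 4) := by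
      rw [hsplit]
      apply mul_le_mul hbound1 hbound2 (le_of_lt (hpos _ (hbd _).1 (hbd _).2)) (le_of_lt hQpos)
    refine le_trans (min_le_left _ _) ?_
    rw [div_le_div_iff₀ (hpos (m + 4) (by omega) (by omega)) hPpos]
    have h3pos : 0 < σ (m + 3) := hpos _ (by omega) (by omega)
    calc σ (m + 2 + 1) * (∏ l : Fin (m + 2), σ (i l))
        ≤ σ (m + 3) * ((∏ j ∈ Finset.Icc 1 (m + 1), σ j) * σ (m + 4)) :=
          mul_le_mul_of_nonneg_left hPbound (le_of_lt h3pos)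
      _ = (∏ j ∈ Finset.Icc 1 (m + 1), σ j) * σ (m + 2 + 1) * σ (m + 2 + 2) := by ring
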